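/- arXiv:1711.07293 — 3 statements merged into one kernel-verified Lean document; each statement's English description precedes it below -/
import Mathlib

section
/- Let A be a unital C*-algebra carrying a faithful tracial state τ, and let Δ : A → A be a map such that for every pair x, y ∈ A there exists an element m ∈ A with Δ(x) = mx − xm and Δ(y) = my − ym. Then Δ is additive: Δ(u + v) = Δ(u) + Δ(v) for all u, v ∈ A. -/
open scoped ComplexOrder

/-!
Write `d = Δ (u + v) - Δ u - Δ v` and pick implementing elements `m, m₁, m₂` for the pairs
`(u + v, d*)`, `(u, d*)`, `(v, d*)`. Moving commutators across a trace gives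
`τ (d d*) = τ ((m - m₁) [u, d*]) + τ ((m - m₂) [v, d*])`, and both terms vanish because
`m - m₁` and `m - m₂` commute with `d*`. Faithfulness then forces `d = 0`.
-/

section Trace

variable {R M F : Type*} [Ring R] [AddCommGroup M] [FunLike F R M] [AddMonoidHomClass F R M]
  (τ : F) (hτ : ∀ a b : R, τ (a * b) = τ (b * a))
include hτ

theorem trace_commutator_mul (m x z : R) :
    τ ((m * x - x * m) * z) = τ (m * (x * z - z * x)) := by
  have h : τ (x * m * z) = τ (m * (z * x)) := by
    rw [mul_assoc, hτ x (m * z), mul_assoc]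
  rw [sub_mul, map_sub, mul_assoc, h, mul_sub, map_sub]

theorem trace_mul_commutator_eq_zero_of_commute {p z : R} (hp : Commute p z) (x : R) :
    τ (p * (x * z - z * x)) = 0 := by
  have h : τ (p * (z * x)) = τ (p * (x * z)) := by
    rw [← mul_assoc, hp.eq, mul_assoc, hτ z, mul_assoc]
  rw [mul_sub, map_sub, h, sub_self]

theorem trace_additivity_defect_mul_eq_zero {Δ : R → R}
    (hΔ : ∀ x y : R, ∃ m : R, Δ x = m * x - x * m ∧ Δ y = m * y - y * m) (u v z : R) :
    τ ((Δ (u + v) - (Δ u + Δ v)) * z) = 0 := by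
  obtain ⟨m, hm, hmz⟩ := hΔ (u + v) z
  obtain ⟨m₁, hm₁, hm₁z⟩ := hΔ u z
  obtain ⟨m₂, hm₂, hm₂z⟩ := hΔ v z
  have hcomm {n : R} (hn : m * z - z * m = n * z - z * n) : Commute (m - n) z := by
    rw [commute_iff_eq, ← sub_eq_zero]
    calc (m - n) * z - z * (m - n) = (m * z - z * m) - (n * z - z * n) := by noncomm_ring
      _ = 0 := by rw [hn, sub_self]
  calc τ ((Δ (u + v) - (Δ u + Δ v)) * z)
      = τ (m * ((u + v) * z - z * (u + v))) - τ (m₁ * (u * z - z * u))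
          - τ (m₂ * (v * z - z * v)) := by
        rw [hm, hm₁, hm₂, ← trace_commutator_mul τ hτ, ← trace_commutator_mul τ hτ,
          ← trace_commutator_mul τ hτ, ← map_sub, ← map_sub]
        congr 1
        noncomm_ring
    _ = τ ((m - m₁) * (u * z - z * u)) + τ ((m - m₂) * (v * z - z * v)) := by
        rw [← map_sub, ← map_sub, ← map_add]
        congr 1
        noncomm_ring
    _ = 0 := by
        rw [trace_mul_commutator_eq_zero_of_commute τ hτ (hcomm (hmz.symm.trans hm₁z)),
          trace_mul_commutator_eq_zero_of_commute τ hτ (hcomm (hmz.symm.trans hm₂z)), add_zero]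

end Trace

theorem additive_of_pointwise_inner_faithful_trace_general
    {A : Type*} [NormedRing A] [StarRing A] [NormedAlgebra ℂ A]
    (τ : A →L[ℂ] ℂ)
    (hτtr : ∀ a b : A, τ (a * b) = τ (b * a))
    (hτfaith : ∀ a : A, τ (star a * a) = 0 → a = 0)
    (Δ : A → A)
    (hΔ : ∀ x y : A, ∃ m : A, Δ x = m * x - x * m ∧ Δ y = m * y - y * m) :
    ∀ u v : A, Δ (u + v) = Δ u + Δ v := by
  intro u v
  set d := Δ (u + v) - (Δ u + Δ v)
  have hd : τ (star d * d) = 0 := by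
    rw [hτtr]
    exact trace_additivity_defect_mul_eq_zero τ hτtr hΔ u v (star d)
  exact sub_eq_zero.mp (hτfaith d hd)

/-- Let `A` be a unital C*-algebra carrying a faithful tracial state
`τ`, and let `Δ : A → A` be a map such that for every pair `x, y ∈ A` there is
`m ∈ A` with `Δ x = m * x - x * m` and `Δ y = m * y - y * m`. Then `Δ` is additive. -/
theorem additive_of_pointwise_inner_faithful_trace
    {A : Type*} [NormedRing A] [StarRing A] [CStarRing A] [NormedAlgebra ℂ A]
    [CompleteSpace A] [StarModule ℂ A]
    (τ : A →L[ℂ] ℂ)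
    (hτ1 : τ 1 = 1)
    (hτpos : ∀ a : A, 0 ≤ τ (star a * a))
    (hτtr : ∀ a b : A, τ (a * b) = τ (b * a))
    (hτfaith : ∀ a : A, τ (star a * a) = 0 → a = 0)
    (Δ : A → A)
    (hΔ : ∀ x y : A, ∃ m : A, Δ x = m * x - x * m ∧ Δ y = m * y - y * m) :
    ∀ u v : A, Δ (u + v) = Δ u + Δ v :=
  additive_of_pointwise_inner_faithful_trace_general τ hτtr hτfaith Δ hΔ
end

section
/- Let A be a unital C*-algebra carrying a faithful tracial state τ, and let Δ : A → A be a 2-local derivation such that for every pair x, y ∈ A the witnessing derivation can be chosen inner, i.e. there exists m ∈ A with Δ(x) = mx − xm and Δ(y) = my − ym. Then Δ is a derivation: it is ℂ-linear and satisfies Δ(ab) = aΔ(b) + Δ(a)b for all a, b ∈ A. -/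
open scoped ComplexOrder

/-!
For an inner derivation `[m, ·]` traciality gives `τ ([m, x] * y) = -τ (x * [m, y])`, so a 2-local
inner `Δ` satisfies `τ (Δ x * y) = -τ (x * Δ y)`. The right-hand side is additive in `x`, and a
faithful trace separates points, so `Δ` is additive; the pair `(x, x * x)` makes it a Jordan
derivation. A faithful trace also makes `A` semiprime, and Herstein's argument shows that in a
2-torsion-free semiprime ring the defect `G x y = D (x * y) - D x * y - x * D y` of a Jordan
derivation satisfies `G x y * w * ⁅u, v⁆ = 0`. For a 2-local inner derivation `G x y` is itself a
commutator, so `G x y * w * G x y = 0` for all `w`, whence `G x y = 0`.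
-/

def IsSemiprimeRing (A : Type*) [Ring A] : Prop :=
  ∀ a : A, (∀ x : A, a * x * a = 0) → a = 0

def IsJordanDerivation {A : Type*} [Ring A] (D : A →+ A) : Prop :=
  ∀ x : A, D (x * x) = x * D x + D x * x

def derivationDefect {A : Type*} [Ring A] (Δ : A → A) (x y : A) : A :=
  Δ (x * y) - Δ x * y - x * Δ y

def IsTwoLocalInner {A : Type*} [Ring A] (Δ : A → A) : Prop :=
  ∀ x y : A, ∃ m : A, Δ x = m * x - x * m ∧ Δ y = m * y - y * m

section Semiprime

variable {A : Type*} [Ring A]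

theorem IsSemiprimeRing.mul_mul_eq_zero_of_forall_add_eq_zero [IsAddTorsionFree A]
    (hA : IsSemiprimeRing A) {a b : A} (h : ∀ w, a * w * b + b * w * a = 0) (w : A) :
    a * w * b = 0 := by
  have swap (z : A) : b * z * a = -(a * z * b) := eq_neg_of_add_eq_zero_right (h z)
  refine hA _ fun y => ?_
  -- for `u = a w b`, three uses of `b z a = -(a z b)` turn `u y u` into `-(u y u)`
  have h2 : a * w * b * y * (a * w * b) + a * w * b * y * (a * w * b) = 0 := by
    have e1 := swap y
    have e2 := swap (w * a * y)
    have e3 := swap w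
    linear_combination (norm := noncomm_ring)
      (a * w) * e1 * (w * b) - e2 * (w * b) + e3 * (y * a * w * b)
  rw [← two_nsmul] at h2
  exact (nsmul_eq_zero_iff_right two_ne_zero).mp h2

theorem IsSemiprimeRing.mul_mul_eq_zero_of_forall_add_eq_zero_of_forall_mul_mul_eq_zero
    (hA : IsSemiprimeRing A) {p q r s : A} (h : ∀ w, p * w * q + r * w * s = 0)
    (h' : ∀ w, q * w * r = 0) (w : A) : p * w * q = 0 := by
  refine hA _ fun z => ?_
  linear_combination (norm := noncomm_ring) (p * w * q * z) * h w - (p * w) * h' z * (w * s)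

end Semiprime

section FaithfulTrace

variable {A M F : Type*} [Ring A] [StarRing A] [FunLike F A M] (τ : F)

theorem eq_zero_of_forall_trace_mul_eq_zero [Zero M] (hτtr : ∀ a b : A, τ (a * b) = τ (b * a))
    (hτfaith : ∀ a : A, τ (star a * a) = 0 → a = 0) {z : A} (hz : ∀ w, τ (z * w) = 0) :
    z = 0 :=
  hτfaith z ((hτtr (star z) z).trans (hz (star z)))

theorem isSemiprimeRing_of_faithful_trace [Zero M] [ZeroHomClass F A M]
    (hτtr : ∀ a b : A, τ (a * b) = τ (b * a)) (hτfaith : ∀ a : A, τ (star a * a) = 0 → a = 0) :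
    IsSemiprimeRing A := by
  intro s hs
  have hss : s * star s = 0 := by
    apply hτfaith
    have e : star (s * star s) * (s * star s) = s * star s * s * star s := by
      simp only [star_mul, star_star]; noncomm_ring
    rw [e, hs, zero_mul, map_zero]
  exact hτfaith s (by rw [hτtr, hss, map_zero])

end FaithfulTrace

section Defect

variable {A : Type*} [Ring A] (D : A →+ A)

theorem derivationDefect_add_left (x u y : A) :
    derivationDefect D (x + u) y = derivationDefect D x y + derivationDefect D u y := by
  simp only [derivationDefect, add_mul, map_add]
  abel

theorem derivationDefect_add_right (x y v : A) :
    derivationDefect D x (y + v) = derivationDefect D x y + derivationDefect D x v := by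
  simp only [derivationDefect, mul_add, map_add]
  abel

end Defect

namespace IsJordanDerivation

variable {A : Type*} [Ring A] {D : A →+ A}

theorem map_mul_add_mul_comm (hD : IsJordanDerivation D) (x y : A) :
    D (x * y + y * x) = D x * y + x * D y + D y * x + y * D x := by
  have h := hD (x + y)
  simp only [add_mul, mul_add, map_add, hD x, hD y] at h
  rw [map_add]
  linear_combination (norm := noncomm_ring) h

theorem map_mul_mul_self [IsAddTorsionFree A] (hD : IsJordanDerivation D) (x y : A) :
    D (x * y * x) = D x * y * x + x * D y * x + x * y * D x := by
  have h := hD.map_mul_add_mul_comm x (x * y + y * x)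
  rw [show x * (x * y + y * x) + (x * y + y * x) * x
      = (x * x * y + y * (x * x)) + (x * y * x + x * y * x) by noncomm_ring,
    map_add, hD.map_mul_add_mul_comm (x * x) y, map_add D (x * y * x), hD.map_mul_add_mul_comm x y,
    hD x] at h
  apply nsmul_right_injective two_ne_zero
  simp only [two_nsmul]
  linear_combination (norm := noncomm_ring) h

theorem map_mul_mul_add_mul_mul [IsAddTorsionFree A] (hD : IsJordanDerivation D) (x y z : A) :
    D (x * y * z + z * y * x)
      = D x * y * z + x * D y * z + x * y * D z + D z * y * x + z * D y * x + z * y * D x := by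
  have h := hD.map_mul_mul_self (x + z) y
  rw [show (x + z) * y * (x + z) = x * y * x + z * y * z + (x * y * z + z * y * x) by noncomm_ring,
    map_add, map_add, hD.map_mul_mul_self x y, hD.map_mul_mul_self z y, map_add D x z] at h
  linear_combination (norm := noncomm_ring) h

theorem derivationDefect_mul_mul_lie_add_lie_mul_mul_derivationDefect [IsAddTorsionFree A]
    (hD : IsJordanDerivation D) (x y w : A) :
    derivationDefect D x y * w * ⁅x, y⁆ + ⁅x, y⁆ * w * derivationDefect D x y = 0 := by
  -- expand `D (x y w y x + y x w x y)` once as a linearized triple and once as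
  -- `D (x (y w y) x) + D (y (x w x) y)`
  have h := hD.map_mul_mul_add_mul_mul (x * y) w (y * x)
  have hyx := hD.map_mul_add_mul_comm x y
  rw [map_add] at hyx
  rw [show x * y * w * (y * x) + y * x * w * (x * y) = x * (y * w * y) * x + y * (x * w * x) * y
      by noncomm_ring, map_add, hD.map_mul_mul_self x (y * w * y),
    hD.map_mul_mul_self y (x * w * x), hD.map_mul_mul_self y w, hD.map_mul_mul_self x w] at h
  simp only [derivationDefect, Ring.lie_def]
  linear_combination (norm := noncomm_ring) h + x * y * w * hyx + hyx * w * (x * y)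

variable [IsAddTorsionFree A]

-- makes `add_lie` and `lie_add` available for the ring commutator
attribute [local instance] LieRing.ofAssociativeRing

theorem derivationDefect_mul_mul_lie_self_eq_zero (hD : IsJordanDerivation D)
    (hA : IsSemiprimeRing A) (x y w : A) : derivationDefect D x y * w * ⁅x, y⁆ = 0 :=
  hA.mul_mul_eq_zero_of_forall_add_eq_zero
    (hD.derivationDefect_mul_mul_lie_add_lie_mul_mul_derivationDefect x y) w

theorem lie_self_mul_mul_derivationDefect_eq_zero (hD : IsJordanDerivation D)
    (hA : IsSemiprimeRing A) (x y w : A) : ⁅x, y⁆ * w * derivationDefect D x y = 0 := by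
  simpa only [hD.derivationDefect_mul_mul_lie_self_eq_zero hA, zero_add] using
    hD.derivationDefect_mul_mul_lie_add_lie_mul_mul_derivationDefect x y w

theorem derivationDefect_mul_mul_lie_right_eq_zero (hD : IsJordanDerivation D)
    (hA : IsSemiprimeRing A) (x y u w : A) : derivationDefect D x y * w * ⁅u, y⁆ = 0 := by
  refine hA.mul_mul_eq_zero_of_forall_add_eq_zero_of_forall_mul_mul_eq_zero
    (r := derivationDefect D u y) (s := ⁅x, y⁆) (fun w => ?_)
    (hD.lie_self_mul_mul_derivationDefect_eq_zero hA u y) w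
  have h := hD.derivationDefect_mul_mul_lie_self_eq_zero hA (x + u) y w
  rw [derivationDefect_add_left, add_lie] at h
  linear_combination (norm := noncomm_ring) h
    - hD.derivationDefect_mul_mul_lie_self_eq_zero hA x y w
    - hD.derivationDefect_mul_mul_lie_self_eq_zero hA u y w

theorem lie_right_mul_mul_derivationDefect_eq_zero (hD : IsJordanDerivation D)
    (hA : IsSemiprimeRing A) (x y u w : A) : ⁅u, y⁆ * w * derivationDefect D x y = 0 := by
  refine hA.mul_mul_eq_zero_of_forall_add_eq_zero_of_forall_mul_mul_eq_zero
    (r := ⁅x, y⁆) (s := derivationDefect D u y) (fun w => ?_)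
    (hD.derivationDefect_mul_mul_lie_self_eq_zero hA x y) w
  have h := hD.lie_self_mul_mul_derivationDefect_eq_zero hA (x + u) y w
  rw [derivationDefect_add_left, add_lie] at h
  linear_combination (norm := noncomm_ring) h
    - hD.lie_self_mul_mul_derivationDefect_eq_zero hA x y w
    - hD.lie_self_mul_mul_derivationDefect_eq_zero hA u y w

theorem derivationDefect_mul_mul_lie_eq_zero (hD : IsJordanDerivation D)
    (hA : IsSemiprimeRing A) (x y w u v : A) : derivationDefect D x y * w * ⁅u, v⁆ = 0 := by
  refine hA.mul_mul_eq_zero_of_forall_add_eq_zero_of_forall_mul_mul_eq_zero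
    (r := derivationDefect D x v) (s := ⁅u, y⁆) (fun w => ?_)
    (hD.lie_right_mul_mul_derivationDefect_eq_zero hA x v u) w
  have h := hD.derivationDefect_mul_mul_lie_right_eq_zero hA x (y + v) u w
  rw [derivationDefect_add_right, lie_add] at h
  linear_combination (norm := noncomm_ring) h
    - hD.derivationDefect_mul_mul_lie_right_eq_zero hA x y u w
    - hD.derivationDefect_mul_mul_lie_right_eq_zero hA x v u w

end IsJordanDerivation

namespace IsTwoLocalInner

variable {A : Type*} [Ring A] {Δ : A → A}

theorem map_smul {R : Type*} [Monoid R] [DistribMulAction R A] [SMulCommClass R A A]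
    [IsScalarTower R A A] (hΔ : IsTwoLocalInner Δ) (c : R) (x : A) :
    Δ (c • x) = c • Δ x := by
  obtain ⟨m, hcx, hx⟩ := hΔ (c • x) x
  rw [hcx, hx, mul_smul_comm, smul_mul_assoc, ← smul_sub]

theorem map_mul_self (hΔ : IsTwoLocalInner Δ) (x : A) : Δ (x * x) = x * Δ x + Δ x * x := by
  obtain ⟨m, hx, hxx⟩ := hΔ x (x * x)
  rw [hx, hxx]
  noncomm_ring

theorem exists_derivationDefect_eq_lie (hΔ : IsTwoLocalInner Δ) (x y : A) :
    ∃ n : A, derivationDefect Δ x y = ⁅n, x * y⁆ := by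
  obtain ⟨m, hx, hy⟩ := hΔ x y
  obtain ⟨n, hxy, -⟩ := hΔ (x * y) (x * y)
  refine ⟨n - m, ?_⟩
  rw [derivationDefect, hxy, hx, hy, Ring.lie_def]
  noncomm_ring

variable {M F : Type*} [AddCommGroup M] [FunLike F A M] [AddMonoidHomClass F A M] (τ : F)

theorem trace_map_mul_eq_neg_trace_mul_map (hΔ : IsTwoLocalInner Δ)
    (hτtr : ∀ a b : A, τ (a * b) = τ (b * a)) (x y : A) : τ (Δ x * y) = -τ (x * Δ y) := by
  obtain ⟨m, hx, hy⟩ := hΔ x y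
  rw [hx, hy, show (m * x - x * m) * y = m * (x * y) - x * (m * y) by noncomm_ring,
    show x * (m * y - y * m) = x * (m * y) - x * y * m by noncomm_ring,
    map_sub, map_sub, hτtr m (x * y), neg_sub]

theorem map_add [StarRing A] (hΔ : IsTwoLocalInner Δ)
    (hτtr : ∀ a b : A, τ (a * b) = τ (b * a))
    (hτfaith : ∀ a : A, τ (star a * a) = 0 → a = 0) (x y : A) : Δ (x + y) = Δ x + Δ y := by
  rw [← sub_eq_zero, ← sub_sub]
  refine eq_zero_of_forall_trace_mul_eq_zero τ hτtr hτfaith fun w => ?_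
  simp only [sub_mul, add_mul, map_sub, _root_.map_add,
    hΔ.trace_map_mul_eq_neg_trace_mul_map τ hτtr]
  abel

end IsTwoLocalInner

theorem twoLocal_inner_is_derivation_of_faithful_trace_general
    {A : Type*} [NormedRing A] [StarRing A] [NormedAlgebra ℂ A]
    (τ : A →L[ℂ] ℂ)
    (hτtr : ∀ a b : A, τ (a * b) = τ (b * a))
    (hτfaith : ∀ a : A, τ (star a * a) = 0 → a = 0)
    (Δ : A → A)
    (hΔ : ∀ x y : A, ∃ m : A, Δ x = m * x - x * m ∧ Δ y = m * y - y * m) :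
    (∀ u v : A, Δ (u + v) = Δ u + Δ v) ∧
    (∀ (c : ℂ) (x : A), Δ (c • x) = c • Δ x) ∧
    (∀ a b : A, Δ (a * b) = a * Δ b + Δ a * b) := by
  have : IsAddTorsionFree A := .of_isTorsionFree ℂ A
  have hΔ : IsTwoLocalInner Δ := hΔ
  have hadd := hΔ.map_add τ hτtr hτfaith
  have hD : IsJordanDerivation (AddMonoidHom.mk' Δ hadd) := hΔ.map_mul_self
  have hA := isSemiprimeRing_of_faithful_trace τ hτtr hτfaith
  refine ⟨hadd, hΔ.map_smul, fun a b => ?_⟩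
  obtain ⟨n, hn⟩ := hΔ.exists_derivationDefect_eq_lie a b
  have hG : derivationDefect Δ a b = 0 := hA _ fun w => by
    have h := hD.derivationDefect_mul_mul_lie_eq_zero hA a b w n (a * b)
    rwa [← hn] at h
  rw [derivationDefect, sub_sub, sub_eq_zero] at hG
  rw [hG, add_comm]

/-- Let `A` be a unital C*-algebra carrying a faithful tracial state
`τ`, and let `Δ : A → A` be a 2-local derivation whose witnessing derivations can
be chosen inner: for every pair `x, y ∈ A` there is `m ∈ A` with
`Δ x = m * x - x * m` and `Δ y = m * y - y * m`. Then `Δ` is a derivation: it is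
ℂ-linear and satisfies `Δ (a * b) = a * Δ b + Δ a * b`. -/
theorem twoLocal_inner_is_derivation_of_faithful_trace
    {A : Type*} [NormedRing A] [StarRing A] [CStarRing A] [NormedAlgebra ℂ A]
    [CompleteSpace A] [StarModule ℂ A]
    (τ : A →L[ℂ] ℂ)
    (hτ1 : τ 1 = 1)
    (hτpos : ∀ a : A, 0 ≤ τ (star a * a))
    (hτtr : ∀ a b : A, τ (a * b) = τ (b * a))
    (hτfaith : ∀ a : A, τ (star a * a) = 0 → a = 0)
    (Δ : A → A)
    (hΔ : ∀ x y : A, ∃ m : A, Δ x = m * x - x * m ∧ Δ y = m * y - y * m) :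
    (∀ u v : A, Δ (u + v) = Δ u + Δ v) ∧
    (∀ (c : ℂ) (x : A), Δ (c • x) = c • Δ x) ∧
    (∀ a b : A, Δ (a * b) = a * Δ b + Δ a * b) :=
  twoLocal_inner_is_derivation_of_faithful_trace_general τ hτtr hτfaith Δ hΔ
end

section
/- Let A be a unital C*-algebra carrying a faithful tracial state τ, and let Δ : A → A be a map such that for every pair x, y ∈ A there exists a sequence (mₙ) of elements of A with Δ(x) = limₙ (mₙx − xmₙ) and Δ(y) = limₙ (mₙy − ymₙ) in norm. Then Δ is additive: Δ(u + v) = Δ(u) + Δ(v) for all u, v ∈ A. -/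
/-!
A trace vanishes on commutators, so applying it to the Leibniz-type identity
`(m x - x m) y + x (m y - y m) = m (x y) - (x y) m` and passing to the limit gives
`τ (Δ x * y + x * Δ y) = 0` for all `x, y`. Hence `d = Δ (u + v) - Δ u - Δ v` satisfies
`τ (d * y) = 0` for every `y`; taking `y = star d` and using faithfulness gives `d = 0`.
-/

open scoped ComplexOrder

open Filter Topology

section Trace

variable {R A M : Type*} [Semiring R] [Ring A] [Module R A] [TopologicalSpace A]
  [IsTopologicalRing A] [AddCommGroup M] [Module R M] [TopologicalSpace M] [T2Space M]

theorem trace_mul_add_mul_eq_zero_of_tendsto_commutator (τ : A →L[R] M)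
    (hτtr : ∀ a b : A, τ (a * b) = τ (b * a)) {m : ℕ → A} {x y a b : A}
    (hx : Tendsto (fun n => m n * x - x * m n) atTop (𝓝 a))
    (hy : Tendsto (fun n => m n * y - y * m n) atTop (𝓝 b)) :
    τ (a * y + x * b) = 0 := by
  have hlim : Tendsto (fun n => τ ((m n * x - x * m n) * y + x * (m n * y - y * m n)))
      atTop (𝓝 (τ (a * y + x * b))) :=
    (τ.continuous.tendsto _).comp ((hx.mul_const y).add (hy.const_mul x))
  have hzero : ∀ n, τ ((m n * x - x * m n) * y + x * (m n * y - y * m n)) = 0 := fun n => by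
    rw [show (m n * x - x * m n) * y + x * (m n * y - y * m n) = m n * (x * y) - x * y * m n by
      noncomm_ring, map_sub, hτtr, sub_self]
  simp only [hzero] at hlim
  exact tendsto_nhds_unique hlim tendsto_const_nhds

end Trace

theorem eq_zero_of_forall_trace_mul_eq_zero_s10 {A M : Type*} [Ring A] [StarRing A] [Zero M]
    (τ : A → M) (hτfaith : ∀ a : A, τ (star a * a) = 0 → a = 0) {d : A}
    (hd : ∀ y : A, τ (d * y) = 0) : d = 0 := by
  have hstar : star d = 0 := hτfaith _ (by rw [star_star]; exact hd (star d))
  simpa using congrArg star hstar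

theorem additive_of_pointwise_approx_inner_faithful_trace_general
    {A : Type*} [NormedRing A] [StarRing A] [NormedAlgebra ℂ A]
    (τ : A →L[ℂ] ℂ)
    (hτtr : ∀ a b : A, τ (a * b) = τ (b * a))
    (hτfaith : ∀ a : A, τ (star a * a) = 0 → a = 0)
    (Δ : A → A)
    (hΔ : ∀ x y : A, ∃ m : ℕ → A,
      Tendsto (fun n => m n * x - x * m n) atTop (𝓝 (Δ x)) ∧
      Tendsto (fun n => m n * y - y * m n) atTop (𝓝 (Δ y))) :
    ∀ u v : A, Δ (u + v) = Δ u + Δ v := by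
  have leibniz : ∀ x y : A, τ (Δ x * y) + τ (x * Δ y) = 0 := fun x y => by
    obtain ⟨m, hx, hy⟩ := hΔ x y
    rw [← map_add]
    exact trace_mul_add_mul_eq_zero_of_tendsto_commutator τ hτtr hx hy
  intro u v
  rw [← sub_eq_zero]
  refine eq_zero_of_forall_trace_mul_eq_zero_s10 τ hτfaith fun y => ?_
  have huv := leibniz (u + v) y
  have hu := leibniz u y
  have hv := leibniz v y
  simp only [sub_mul, add_mul, map_sub, map_add] at huv ⊢
  linear_combination huv - hu - hv

/-- Let `A` be a unital C*-algebra carrying a faithful tracial state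
`τ`, and let `Δ : A → A` be a map such that for every pair `x, y ∈ A` there is a
sequence `(mₙ)` in `A` with `Δ x = limₙ (mₙ * x - x * mₙ)` and
`Δ y = limₙ (mₙ * y - y * mₙ)` in norm. Then `Δ` is additive. -/
theorem additive_of_pointwise_approx_inner_faithful_trace
    {A : Type*} [NormedRing A] [StarRing A] [CStarRing A] [NormedAlgebra ℂ A]
    [CompleteSpace A] [StarModule ℂ A]
    (τ : A →L[ℂ] ℂ)
    (hτ1 : τ 1 = 1)
    (hτpos : ∀ a : A, 0 ≤ τ (star a * a))
    (hτtr : ∀ a b : A, τ (a * b) = τ (b * a))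
    (hτfaith : ∀ a : A, τ (star a * a) = 0 → a = 0)
    (Δ : A → A)
    (hΔ : ∀ x y : A, ∃ m : ℕ → A,
      Tendsto (fun n => m n * x - x * m n) atTop (𝓝 (Δ x)) ∧
      Tendsto (fun n => m n * y - y * m n) atTop (𝓝 (Δ y))) :
    ∀ u v : A, Δ (u + v) = Δ u + Δ v :=
  additive_of_pointwise_approx_inner_faithful_trace_general τ hτtr hτfaith Δ hΔ
end
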